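/- arXiv:1904.09332 — 2 statements merged into one kernel-verified Lean document; each statement's English description precedes it below -/
import Mathlib

section
/- Let S and M be symmetric positive definite real N×N matrices, f ∈ ℝ^N, and for y ≥ 0 set w₋(y) := (S + e^{-y} M)^{-1} f and w₊(y) := (e^{-y} S + M)^{-1} f. For s ∈ (0,1) put s₋ := 1-s, s₊ := s, β₀(t) := sin(πt)/(πt), and define the semi-discrete solution ũ(s) := β₀(s₋) ∫₀^∞ w₋(y/s₋) e^{-y} dy + β₀(s₊) ∫₀^∞ w₊(y/s₊) e^{-y} dy (the Bochner integrals converge since the integrands are continuous with M-norm bounded by a constant times e^{-y}). Then for every s ∈ (0,1): ‖ũ(s)‖_M ≤ (4/π) · max(1, 1/λ_min(S, M)) · ‖f‖_{M^{-1}}. -/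
open Matrix MeasureTheory Real Set

/-- The smallest generalized eigenvalue of the pair `(S, M)`:
`λ_min(S, M) = inf_{x ≠ 0} (xᵀ S x)/(xᵀ M x)`. -/
noncomputable def lamMinGen {N : ℕ} (S M : Matrix (Fin N) (Fin N) ℝ) : ℝ :=
  sInf ((fun x : Fin N → ℝ => (x ⬝ᵥ S.mulVec x) / (x ⬝ᵥ M.mulVec x)) '' {x | x ≠ 0})

/-- The `M`-norm `‖x‖_M = √(xᵀ M x)`. -/
noncomputable def normWeighted {N : ℕ} (M : Matrix (Fin N) (Fin N) ℝ) (x : Fin N → ℝ) : ℝ :=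
  Real.sqrt (x ⬝ᵥ M.mulVec x)

/-- `w₋(y) = (S + e^{-y} M)⁻¹ f`. -/
noncomputable def wMinus {N : ℕ} (S M : Matrix (Fin N) (Fin N) ℝ) (f : Fin N → ℝ)
    (y : ℝ) : Fin N → ℝ :=
  (S + Real.exp (-y) • M)⁻¹.mulVec f

/-- `w₊(y) = (e^{-y} S + M)⁻¹ f`. -/
noncomputable def wPlus {N : ℕ} (S M : Matrix (Fin N) (Fin N) ℝ) (f : Fin N → ℝ)
    (y : ℝ) : Fin N → ℝ :=
  (Real.exp (-y) • S + M)⁻¹.mulVec f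

/-- `β₀(t) = sin(πt)/(πt)`. -/
noncomputable def beta0 (t : ℝ) : ℝ := Real.sin (Real.pi * t) / (Real.pi * t)

/-!
Testing `A w = f` with `w` gives `‖w‖_M² ≤ C wᵀ f ≤ C ‖w‖_M ‖f‖_{M⁻¹}` whenever
`xᵀ M x ≤ C xᵀ A x` for all `x`; this holds with `C = 1 / λ_min(S, M)` for `A = S + e^{-y} M` and
with `C = 1` for `A = e^{-y} S + M`, uniformly in `y`. Averaging against the probability density
`e^{-y}` on `(0, ∞)` keeps these bounds, and what remains is
`β₀(1 - s) + β₀(s) = sin (π s) / (π s (1 - s)) ≤ 4 / π`, i.e. `sin (π s) ≤ 4 s (1 - s)`.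
-/

open scoped RealInnerProductSpace

open scoped MatrixOrder in
theorem Matrix.PosSemidef.exists_dotProduct_mulVec_eq_inner {n : Type*} [Fintype n]
    [DecidableEq n] {M : Matrix n n ℝ} (hM : M.PosSemidef) :
    ∃ L : (n → ℝ) →L[ℝ] EuclideanSpace ℝ n, ∀ x y, x ⬝ᵥ M *ᵥ y = ⟪L x, L y⟫ := by
  obtain ⟨B, rfl⟩ := CStarAlgebra.nonneg_iff_eq_star_mul_self.mp hM.nonneg
  refine ⟨(EuclideanSpace.equiv n ℝ).symm.toContinuousLinearMap ∘L
    LinearMap.toContinuousLinearMap B.mulVecLin, fun x y => ?_⟩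
  simp [EuclideanSpace.inner_eq_star_dotProduct, ← mulVec_mulVec, dotProduct_mulVec,
    star_eq_conjTranspose, vecMul_transpose, dotProduct_comm]

lemma Matrix.mulVec_inv_mulVec {n R : Type*} [Fintype n] [DecidableEq n] [CommRing R]
    {A : Matrix n n R} (hA : IsUnit A.det) (v : n → R) : A *ᵥ (A⁻¹ *ᵥ v) = v := by
  rw [mulVec_mulVec, mul_nonsing_inv _ hA, one_mulVec]

section normWeighted

variable {N : ℕ} {M : Matrix (Fin N) (Fin N) ℝ}

lemma normWeighted_eq_norm {L : (Fin N → ℝ) →L[ℝ] EuclideanSpace ℝ (Fin N)}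
    (hL : ∀ x y, x ⬝ᵥ M *ᵥ y = ⟪L x, L y⟫) (x : Fin N → ℝ) : normWeighted M x = ‖L x‖ := by
  rw [normWeighted, hL, real_inner_self_eq_norm_sq, Real.sqrt_sq (norm_nonneg _)]

lemma normWeighted_nonneg (x : Fin N → ℝ) : 0 ≤ normWeighted M x := Real.sqrt_nonneg _

lemma sq_normWeighted (hM : M.PosSemidef) (x : Fin N → ℝ) :
    normWeighted M x ^ 2 = x ⬝ᵥ M *ᵥ x := by
  obtain ⟨L, hL⟩ := hM.exists_dotProduct_mulVec_eq_inner
  rw [normWeighted_eq_norm hL, hL, real_inner_self_eq_norm_sq]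

lemma normWeighted_smul (c : ℝ) (x : Fin N → ℝ) :
    normWeighted M (c • x) = |c| * normWeighted M x := by
  rw [normWeighted, normWeighted, mulVec_smul, smul_dotProduct, dotProduct_smul, smul_eq_mul,
    smul_eq_mul, ← mul_assoc, Real.sqrt_mul (mul_self_nonneg c), Real.sqrt_mul_self_eq_abs]

lemma normWeighted_add_le (hM : M.PosSemidef) (x y : Fin N → ℝ) :
    normWeighted M (x + y) ≤ normWeighted M x + normWeighted M y := by
  obtain ⟨L, hL⟩ := hM.exists_dotProduct_mulVec_eq_inner
  rw [normWeighted_eq_norm hL, normWeighted_eq_norm hL, normWeighted_eq_norm hL, map_add]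
  exact norm_add_le (L x) (L y)

lemma dotProduct_mulVec_le_normWeighted_mul (hM : M.PosSemidef) (x y : Fin N → ℝ) :
    x ⬝ᵥ M *ᵥ y ≤ normWeighted M x * normWeighted M y := by
  obtain ⟨L, hL⟩ := hM.exists_dotProduct_mulVec_eq_inner
  rw [hL, normWeighted_eq_norm hL, normWeighted_eq_norm hL]
  exact real_inner_le_norm (L x) (L y)

lemma normWeighted_inv_eq (hM : M.PosDef) (f : Fin N → ℝ) :
    normWeighted M⁻¹ f = normWeighted M (M⁻¹ *ᵥ f) := by
  rw [normWeighted, normWeighted, mulVec_inv_mulVec hM.det_pos.ne'.isUnit, dotProduct_comm]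

lemma dotProduct_le_normWeighted_mul_normWeighted_inv (hM : M.PosDef) (x f : Fin N → ℝ) :
    x ⬝ᵥ f ≤ normWeighted M x * normWeighted M⁻¹ f := by
  rw [normWeighted_inv_eq hM]
  convert dotProduct_mulVec_le_normWeighted_mul hM.posSemidef x (M⁻¹ *ᵥ f)
  rw [mulVec_inv_mulVec hM.det_pos.ne'.isUnit]

lemma normWeighted_integral_le {α : Type*} [MeasurableSpace α] {μ : Measure α}
    (hM : M.PosSemidef) {g : α → Fin N → ℝ} {b : α → ℝ} (hb : Integrable b μ)
    (hgb : ∀ᵐ a ∂μ, normWeighted M (g a) ≤ b a) :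
    normWeighted M (∫ a, g a ∂μ) ≤ ∫ a, b a ∂μ := by
  obtain ⟨L, hL⟩ := hM.exists_dotProduct_mulVec_eq_inner
  by_cases hg : Integrable g μ
  · rw [normWeighted_eq_norm hL, ← L.integral_comp_comm hg]
    exact norm_integral_le_of_norm_le hb (by simpa only [normWeighted_eq_norm hL] using hgb)
  · rw [integral_undef hg, normWeighted, mulVec_zero, dotProduct_zero, Real.sqrt_zero]
    exact integral_nonneg_of_ae (hgb.mono fun a h => (normWeighted_nonneg _).trans h)


lemma normWeighted_integral_exp_neg_smul_le (hM : M.PosSemidef) {g : ℝ → Fin N → ℝ} {K : ℝ}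
    (hg : ∀ y, normWeighted M (g y) ≤ K) :
    normWeighted M (∫ y in Ioi (0 : ℝ), exp (-y) • g y) ≤ K :=
  calc normWeighted M (∫ y in Ioi (0 : ℝ), exp (-y) • g y)
      ≤ ∫ y in Ioi (0 : ℝ), exp (-y) * K :=
        normWeighted_integral_le hM ((integrableOn_exp_neg_Ioi 0).mul_const K) <|
          ae_of_all _ fun y => by
            rw [normWeighted_smul, abs_of_pos (exp_pos _)]
            exact mul_le_mul_of_nonneg_left (hg y) (exp_pos _).le
    _ = K := by rw [integral_mul_const, integral_exp_neg_Ioi_zero, one_mul]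

lemma normWeighted_inv_mulVec_le {A : Matrix (Fin N) (Fin N) ℝ} (hM : M.PosDef) {C : ℝ}
    (hC : 0 ≤ C) (hA : ∀ x, x ⬝ᵥ M *ᵥ x ≤ C * (x ⬝ᵥ A *ᵥ x)) (f : Fin N → ℝ) :
    normWeighted M (A⁻¹ *ᵥ f) ≤ C * normWeighted M⁻¹ f := by
  have hdet : IsUnit A.det := by
    refine isUnit_iff_ne_zero.2 fun h0 => ?_
    obtain ⟨v, hv, hAv⟩ := exists_mulVec_eq_zero_iff.2 h0
    have := hA v
    rw [hAv, dotProduct_zero, mul_zero] at this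
    exact this.not_gt (by simpa using hM.dotProduct_mulVec_pos hv)
  set w := A⁻¹ *ᵥ f
  have hw : normWeighted M w * normWeighted M w ≤
      normWeighted M w * (C * normWeighted M⁻¹ f) :=
    calc normWeighted M w * normWeighted M w = w ⬝ᵥ M *ᵥ w := by
          rw [← sq, sq_normWeighted hM.posSemidef]
      _ ≤ C * (w ⬝ᵥ f) := by simpa only [w, mulVec_inv_mulVec hdet] using hA w
      _ ≤ C * (normWeighted M w * normWeighted M⁻¹ f) :=
          mul_le_mul_of_nonneg_left (dotProduct_le_normWeighted_mul_normWeighted_inv hM w f) hC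
      _ = normWeighted M w * (C * normWeighted M⁻¹ f) := by ring
  rcases (normWeighted_nonneg (M := M) w).eq_or_lt with h0 | hpos
  · rw [← h0]
    exact mul_nonneg hC (normWeighted_nonneg f)
  · exact le_of_mul_le_mul_left hw hpos

end normWeighted

section lamMinGen

variable {N : ℕ} {S M : Matrix (Fin N) (Fin N) ℝ}

noncomputable def rayleighQuotientGen (S M : Matrix (Fin N) (Fin N) ℝ) (x : Fin N → ℝ) : ℝ :=
  (x ⬝ᵥ S *ᵥ x) / (x ⬝ᵥ M *ᵥ x)

lemma rayleighQuotientGen_smul {c : ℝ} (hc : c ≠ 0) (x : Fin N → ℝ) :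
    rayleighQuotientGen S M (c • x) = rayleighQuotientGen S M x := by
  simp only [rayleighQuotientGen, mulVec_smul, smul_dotProduct, dotProduct_smul, smul_eq_mul,
    ← mul_assoc]
  exact mul_div_mul_left _ _ (mul_self_ne_zero.2 hc)

lemma lamMinGen_nonneg (hS : S.PosSemidef) (hM : M.PosSemidef) : 0 ≤ lamMinGen S M :=
  Real.sInf_nonneg <| by
    rintro _ ⟨x, -, rfl⟩
    exact div_nonneg (by simpa using hS.dotProduct_mulVec_nonneg x)
      (by simpa using hM.dotProduct_mulVec_nonneg x)

/-- The quotient is scale invariant, so it attains its infimum on the compact unit sphere. -/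
lemma isLeast_lamMinGen (hM : M.PosDef) [Nonempty (Fin N)] :
    IsLeast (rayleighQuotientGen S M '' {x | x ≠ 0}) (lamMinGen S M) := by
  have hne : ∀ x ∈ Metric.sphere (0 : Fin N → ℝ) 1, x ≠ 0 := fun x hx h => by simp [h] at hx
  have hcont : ContinuousOn (rayleighQuotientGen S M) (Metric.sphere 0 1) :=
    ContinuousOn.div (by fun_prop) (by fun_prop) fun x hx => by
      simpa using (hM.dotProduct_mulVec_pos (hne x hx)).ne'
  obtain ⟨x₀, hx₀, hmin⟩ := (isCompact_sphere (0 : Fin N → ℝ) 1).exists_isMinOn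
    (NormedSpace.sphere_nonempty.2 zero_le_one) hcont
  have hleast : IsLeast (rayleighQuotientGen S M '' {x | x ≠ 0}) (rayleighQuotientGen S M x₀) := by
    refine ⟨⟨x₀, hne x₀ hx₀, rfl⟩, ?_⟩
    rintro _ ⟨x, hx, rfl⟩
    rw [← rayleighQuotientGen_smul (inv_ne_zero (norm_ne_zero_iff.2 hx)) x]
    exact hmin (mem_sphere_zero_iff_norm.2 (norm_smul_inv_norm (𝕜 := ℝ) hx))
  have hlam : lamMinGen S M = rayleighQuotientGen S M x₀ := hleast.csInf_eq
  rwa [hlam]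

lemma dotProduct_mulVec_le_inv_lamMinGen_mul (hS : S.PosDef) (hM : M.PosDef) (x : Fin N → ℝ) :
    x ⬝ᵥ M *ᵥ x ≤ (lamMinGen S M)⁻¹ * (x ⬝ᵥ S *ᵥ x) := by
  rcases eq_or_ne x 0 with rfl | hx
  · simp
  obtain ⟨i, -⟩ := Function.ne_iff.1 hx
  have : Nonempty (Fin N) := ⟨i⟩
  obtain ⟨⟨x₀, hx₀, hlam⟩, hle⟩ := isLeast_lamMinGen (S := S) hM
  have hMx : 0 < x ⬝ᵥ M *ᵥ x := by simpa using hM.dotProduct_mulVec_pos hx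
  have hpos : 0 < lamMinGen S M := hlam ▸ div_pos (by simpa using hS.dotProduct_mulVec_pos hx₀)
    (by simpa using hM.dotProduct_mulVec_pos hx₀)
  have hlamx := hle ⟨x, hx, rfl⟩
  rw [rayleighQuotientGen, le_div_iff₀ hMx] at hlamx
  rw [inv_mul_eq_div, le_div_iff₀ hpos, mul_comm]
  exact hlamx

end lamMinGen

section resolvents

variable {N : ℕ} {S M : Matrix (Fin N) (Fin N) ℝ}

lemma normWeighted_wMinus_le (hS : S.PosDef) (hM : M.PosDef) (f : Fin N → ℝ) (y : ℝ) :
    normWeighted M (wMinus S M f y) ≤ (lamMinGen S M)⁻¹ * normWeighted M⁻¹ f := by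
  have hlam : 0 ≤ (lamMinGen S M)⁻¹ :=
    inv_nonneg.2 (lamMinGen_nonneg hS.posSemidef hM.posSemidef)
  refine normWeighted_inv_mulVec_le hM hlam (fun x => ?_) f
  have hMx : 0 ≤ x ⬝ᵥ M *ᵥ x := by simpa using hM.posSemidef.dotProduct_mulVec_nonneg x
  calc x ⬝ᵥ M *ᵥ x ≤ (lamMinGen S M)⁻¹ * (x ⬝ᵥ S *ᵥ x) :=
        dotProduct_mulVec_le_inv_lamMinGen_mul hS hM x
    _ ≤ (lamMinGen S M)⁻¹ * (x ⬝ᵥ S *ᵥ x + exp (-y) * (x ⬝ᵥ M *ᵥ x)) := by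
        gcongr
        exact le_add_of_nonneg_right (mul_nonneg (exp_pos _).le hMx)
    _ = (lamMinGen S M)⁻¹ * (x ⬝ᵥ (S + exp (-y) • M) *ᵥ x) := by
        rw [add_mulVec, smul_mulVec, dotProduct_add, dotProduct_smul, smul_eq_mul]

lemma normWeighted_wPlus_le (hS : S.PosSemidef) (hM : M.PosDef) (f : Fin N → ℝ) (y : ℝ) :
    normWeighted M (wPlus S M f y) ≤ normWeighted M⁻¹ f := by
  have hA : ∀ x, x ⬝ᵥ M *ᵥ x ≤ 1 * (x ⬝ᵥ (exp (-y) • S + M) *ᵥ x) := fun x => by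
    have hSx : 0 ≤ x ⬝ᵥ S *ᵥ x := by simpa using hS.dotProduct_mulVec_nonneg x
    rw [one_mul, add_mulVec, smul_mulVec, dotProduct_add, dotProduct_smul, smul_eq_mul]
    exact le_add_of_nonneg_left (mul_nonneg (exp_pos _).le hSx)
  simpa only [wPlus, one_mul] using normWeighted_inv_mulVec_le hM zero_le_one hA f

end resolvents

/-- Since `cos (π u) = 1 - 2 sin² (π u / 2)`, this is the chord bound `√2 u ≤ sin (π u / 2)`
of the concave function `sin` on `[0, π / 4]`. -/
lemma cos_pi_mul_le_one_sub_four_mul_sq {u : ℝ} (hu : |u| ≤ 1 / 2) :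
    cos (π * u) ≤ 1 - 4 * u ^ 2 := by
  wlog hu₀ : 0 ≤ u
  case inr => simpa using this (by rwa [abs_neg]) <| neg_nonneg.2 <| le_of_not_ge hu₀
  rw [abs_of_nonneg hu₀] at hu
  have hchord : √2 * u ≤ sin (π * u / 2) := by
    have := strictConcaveOn_sin_Icc.concaveOn.2 (⟨le_rfl, pi_pos.le⟩ : (0 : ℝ) ∈ Icc 0 π)
      (⟨by positivity, by linarith [pi_pos]⟩ : π / 4 ∈ Icc 0 π)
      (by linarith : 0 ≤ 1 - 2 * u) (by linarith : 0 ≤ 2 * u) (by ring)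
    simp only [sin_zero, sin_pi_div_four, smul_eq_mul, mul_zero, zero_add] at this
    calc √2 * u = 2 * u * (√2 / 2) := by ring
      _ ≤ sin (2 * u * (π / 4)) := this
      _ = sin (π * u / 2) := by ring_nf
  have hsq : 2 * u ^ 2 ≤ sin (π * u / 2) ^ 2 := by
    calc 2 * u ^ 2 = (√2 * u) ^ 2 := by rw [mul_pow, sq_sqrt zero_le_two]
      _ ≤ sin (π * u / 2) ^ 2 := pow_le_pow_left₀ (by positivity) hchord 2
  rw [sin_sq_eq_half_sub, show 2 * (π * u / 2) = π * u by ring] at hsq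
  linarith

lemma sin_pi_mul_le {s : ℝ} (hs₀ : 0 ≤ s) (hs₁ : s ≤ 1) : sin (π * s) ≤ 4 * s * (1 - s) := by
  have := cos_pi_mul_le_one_sub_four_mul_sq (u := s - 1 / 2) (abs_le.2 ⟨by linarith, by linarith⟩)
  rw [show π * (s - 1 / 2) = π * s - π / 2 by ring, cos_sub_pi_div_two] at this
  linear_combination this

lemma beta0_nonneg {t : ℝ} (ht₀ : 0 ≤ t) (ht₁ : t ≤ 1) : 0 ≤ beta0 t :=
  div_nonneg (sin_nonneg_of_nonneg_of_le_pi (by positivity) (by nlinarith [pi_pos]))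
    (by positivity)

lemma beta0_one_sub_add_beta0_le {s : ℝ} (hs₀ : 0 < s) (hs₁ : s < 1) :
    beta0 (1 - s) + beta0 s ≤ 4 / π := by
  have h1s : 0 < 1 - s := by linarith
  have hsum : beta0 (1 - s) + beta0 s = sin (π * s) / (π * (s * (1 - s))) := by
    rw [beta0, beta0, mul_one_sub, sin_pi_sub]
    field_simp
    ring
  rw [hsum, div_le_div_iff₀ (by positivity) pi_pos]
  nlinarith [sin_pi_mul_le hs₀.le hs₁.le, pi_pos]

/-- s-uniform stability of the semi-discrete solution (matrix form): with
`ũ(s) = β₀(1-s) ∫₀^∞ w₋(y/(1-s)) e^{-y} dy + β₀(s) ∫₀^∞ w₊(y/s) e^{-y} dy`,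
for every `s ∈ (0,1)`,
`‖ũ(s)‖_M ≤ (4/π) max(1, 1/λ_min(S,M)) ‖f‖_{M⁻¹}`. -/
theorem semidiscrete_stability {N : ℕ} (S M : Matrix (Fin N) (Fin N) ℝ)
    (hS : S.PosDef) (hM : M.PosDef) (f : Fin N → ℝ)
    (s : ℝ) (hs : s ∈ Set.Ioo (0:ℝ) 1) :
    normWeighted M
        (beta0 (1 - s) •
            (∫ y in Set.Ioi (0:ℝ), Real.exp (-y) • wMinus S M f (y / (1 - s))) +
          beta0 s •
            (∫ y in Set.Ioi (0:ℝ), Real.exp (-y) • wPlus S M f (y / s))) ≤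
      (4 / Real.pi) * max 1 (1 / lamMinGen S M) * normWeighted M⁻¹ f := by
  obtain ⟨hs₀, hs₁⟩ := hs
  set I₁ := ∫ y in Ioi (0 : ℝ), exp (-y) • wMinus S M f (y / (1 - s))
  set I₂ := ∫ y in Ioi (0 : ℝ), exp (-y) • wPlus S M f (y / s)
  set K := max 1 (1 / lamMinGen S M) * normWeighted M⁻¹ f
  have hK : 0 ≤ K := mul_nonneg (zero_le_one.trans (le_max_left _ _)) (normWeighted_nonneg f)
  have hβ₁ : 0 ≤ beta0 (1 - s) := beta0_nonneg (by linarith) (by linarith)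
  have hβ₂ : 0 ≤ beta0 s := beta0_nonneg hs₀.le hs₁.le
  have hI₁ : normWeighted M I₁ ≤ K :=
    normWeighted_integral_exp_neg_smul_le hM.posSemidef fun y =>
      (normWeighted_wMinus_le hS hM f (y / (1 - s))).trans <|
        mul_le_mul_of_nonneg_right (by rw [← one_div]; exact le_max_right _ _)
          (normWeighted_nonneg f)
  have hI₂ : normWeighted M I₂ ≤ K :=
    normWeighted_integral_exp_neg_smul_le hM.posSemidef fun y =>
      (normWeighted_wPlus_le hS.posSemidef hM f (y / s)).trans <|
        le_mul_of_one_le_left (normWeighted_nonneg f) (le_max_left _ _)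
  calc normWeighted M (beta0 (1 - s) • I₁ + beta0 s • I₂)
      ≤ beta0 (1 - s) * normWeighted M I₁ + beta0 s * normWeighted M I₂ := by
        refine (normWeighted_add_le hM.posSemidef _ _).trans_eq ?_
        rw [normWeighted_smul, normWeighted_smul, abs_of_nonneg hβ₁, abs_of_nonneg hβ₂]
    _ ≤ (beta0 (1 - s) + beta0 s) * K := by rw [add_mul]; gcongr
    _ ≤ 4 / π * K := by gcongr; exact beta0_one_sub_add_beta0_le hs₀ hs₁
    _ = _ := by ring
end

section
/- Let S and M be symmetric positive definite real N×N matrices, f ∈ ℝ^N, and for y ≥ 0 set w₋(y) := (S + e^{-y} M)^{-1} f and w₊(y) := (e^{-y} S + M)^{-1} f. Fix s ∈ (0,1) and put s₋ := 1-s, s₊ := s, β₀(t) := sin(πt)/(πt). Let (y_{j,σ}, τ_{j,σ})_{j=1}^{M_σ}, σ ∈ {+,-}, be quadrature rules with nonnegative nodes and weights. Define ũ(s) := Σ_σ β₀(s_σ) ∫₀^∞ w_σ(y/s_σ) e^{-y} dy and u(s) := Σ_σ β₀(s_σ) Σ_{j=1}^{M_σ} τ_{j,σ} w_σ(y_{j,σ}/s_σ).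 With g_Q(a,b) := | ∫₀^∞ e^{-y}/(1 + a e^{-b y}) dy − Σ_{j=1}^{Q} τ_j/(1 + a e^{-b y_j}) | (computed with the corresponding rule), I₋ := [1/λ_max(S,M), 1/λ_min(S,M)], I₊ := [λ_min(S,M), λ_max(S,M)], and G_σ(M_σ, s) := β₀(s_σ) · sup_{a ∈ I_σ} g_{M_σ}(a, 1/s_σ), the following holds: ‖u(s) − ũ(s)‖_M ≤ max(1, 1/λ_min(S,M)) · ‖f‖_{M^{-1}} · ( G₋(M₋, s) + G₊(M₊, s) ). -/
open Matrix MeasureTheory Real Set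

/-- The largest generalized eigenvalue of the pair `(S, M)`:
`λ_max(S, M) = sup_{x ≠ 0} (xᵀ S x)/(xᵀ M x)`. -/
noncomputable def lamMaxGen {N : ℕ} (S M : Matrix (Fin N) (Fin N) ℝ) : ℝ :=
  sSup ((fun x : Fin N → ℝ => (x ⬝ᵥ S.mulVec x) / (x ⬝ᵥ M.mulVec x)) '' {x | x ≠ 0})

/-- Scalar quadrature error `g(a,b)` for the rule `(y_j, τ_j)_{j=1}^Q`:
`g(a,b) = |∫₀^∞ e^{-y}/(1 + a e^{-by}) dy − Σ_j τ_j/(1 + a e^{-b y_j})|`. -/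
noncomputable def gQuad (Q : ℕ) (y τ : Fin Q → ℝ) (a b : ℝ) : ℝ :=
  |(∫ t in Set.Ioi (0:ℝ), Real.exp (-t) / (1 + a * Real.exp (-b * t))) -
    ∑ j, τ j / (1 + a * Real.exp (-b * y j))|

/-!
Simultaneous diagonalisation. Writing `M = R²` and `R⁻¹ S R⁻¹ = U Λ Uᵀ` with `U` orthogonal,
the matrix `V = R⁻¹ U` satisfies `Vᵀ M V = 1` and `Vᵀ S V = Λ`. In these coordinates both
resolvent families are diagonal, with `g = Vᵀ f`:
`w₋(y) = V diag((λᵢ + e^{-y})⁻¹) g` and `w₊(y) = V diag((e^{-y} λᵢ + 1)⁻¹) g`.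
Hence `u(s) - ũ(s)` is `V` applied to the vector with entries `eᵢ gᵢ`, where `eᵢ` is the
scalar quadrature error at `λᵢ`, and `‖V z‖_M = |z|`, `‖f‖_{M⁻¹} = |g|` reduce the claim to
`|eᵢ| ≤ max(1, 1/λ_min) (β₀(1-s) G₋ + β₀(s) G₊)`. The rescaling
`(λ + e^{-y})⁻¹ = λ⁻¹ (1 + λ⁻¹ e^{-y})⁻¹` identifies the two scalar errors with
`λᵢ⁻¹ g(λᵢ⁻¹, 1/(1-s))` and `g(λᵢ, 1/s)`, and the Rayleigh quotient of `(S, M)` ranges exactly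
over `[min λᵢ, max λᵢ]`, so every `λᵢ` lies in `[λ_min, λ_max]`.
-/

section GenEigenbasis

variable {n : Type*} [Fintype n]

theorem Matrix.mulVec_dotProduct_mulVec_mulVec {R : Type*} [CommSemiring R] (V P : Matrix n n R)
    (z : n → R) :
    (V *ᵥ z) ⬝ᵥ (P *ᵥ (V *ᵥ z)) = z ⬝ᵥ ((Vᵀ * P * V) *ᵥ z) := by
  rw [← vecMul_transpose V z, dotProduct_mulVec, dotProduct_mulVec, vecMul_vecMul,
    vecMul_transpose, dotProduct_mulVec, vecMul_vecMul, Matrix.mul_assoc]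

variable [DecidableEq n]

structure IsGenEigenbasis (S M V : Matrix n n ℝ) (lam : n → ℝ) : Prop where
  orthonormal : Vᵀ * M * V = 1
  diagonalizes : Vᵀ * S * V = diagonal lam

theorem Matrix.IsHermitian.exists_orthogonal_diagonalization {A : Matrix n n ℝ}
    (hA : A.IsHermitian) :
    ∃ U : Matrix n n ℝ, Uᵀ * U = 1 ∧ Uᵀ * A * U = diagonal hA.eigenvalues := by
  refine ⟨hA.eigenvectorUnitary, Unitary.coe_star_mul_self hA.eigenvectorUnitary, ?_⟩
  have := hA.conjStarAlgAut_star_eigenvectorUnitary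
  rwa [Unitary.conjStarAlgAut_star_apply, RCLike.ofReal_real_eq_id, Function.id_comp,
    star_eq_conjTranspose, conjTranspose_eq_transpose_of_trivial] at this

open scoped MatrixOrder in
theorem exists_isGenEigenbasis {S M : Matrix n n ℝ} (hS : S.IsHermitian) (hM : M.PosDef) :
    ∃ V lam, IsGenEigenbasis S M V lam := by
  set R := CFC.sqrt M
  have hRT : Rᵀ = R := (CFC.sqrt_nonneg M).posSemidef.isHermitian
  have hRR : R * R = M := CFC.sqrt_mul_sqrt_self M hM.posSemidef.nonneg
  have hR : IsUnit R.det := by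
    refine isUnit_iff_ne_zero.2 fun h => hM.det_pos.ne' ?_
    rw [← hRR, det_mul, h, mul_zero]
  have hST : Sᵀ = S := hS
  have hA : (R⁻¹ * S * R⁻¹).IsHermitian := by
    simp only [IsHermitian, conjTranspose_eq_transpose_of_trivial, transpose_mul,
      transpose_nonsing_inv, hRT, hST, Matrix.mul_assoc]
  obtain ⟨U, hUU, hUAU⟩ := hA.exists_orthogonal_diagonalization
  refine ⟨R⁻¹ * U, hA.eigenvalues, ?_, ?_⟩
  · rw [transpose_mul, transpose_nonsing_inv, hRT, ← hRR]
    calc Uᵀ * R⁻¹ * (R * R) * (R⁻¹ * U) = Uᵀ * ((R⁻¹ * R) * (R * R⁻¹)) * U := by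
          simp only [Matrix.mul_assoc]
      _ = 1 := by
          rw [nonsing_inv_mul _ hR, mul_nonsing_inv _ hR, Matrix.mul_one, Matrix.mul_one, hUU]
  · rw [transpose_mul, transpose_nonsing_inv, hRT, ← hUAU]
    simp only [Matrix.mul_assoc]

theorem Matrix.inv_eq_of_transpose_mul_mul_eq_diagonal {K : Type*} [Field K]
    {P V : Matrix n n K} {d : n → K}
    (hV : IsUnit V.det) (hP : Vᵀ * P * V = diagonal d) (hd : ∀ i, d i ≠ 0) :
    P⁻¹ = V * diagonal (fun i => (d i)⁻¹) * Vᵀ := by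
  have hVP : Vᵀ * P = diagonal d * V⁻¹ := by
    rw [← hP, Matrix.mul_assoc _ V, mul_nonsing_inv _ hV, Matrix.mul_one]
  refine inv_eq_left_inv ?_
  rw [Matrix.mul_assoc, hVP, Matrix.mul_assoc, ← Matrix.mul_assoc (diagonal _),
    diagonal_mul_diagonal]
  simp only [inv_mul_cancel₀ (hd _), diagonal_one, Matrix.one_mul, mul_nonsing_inv _ hV]

namespace IsGenEigenbasis

variable {S M V : Matrix n n ℝ} {lam : n → ℝ}

theorem mul_transpose_mul (h : IsGenEigenbasis S M V lam) : V * (Vᵀ * M) = 1 :=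
  mul_eq_one_comm.1 h.orthonormal

theorem isUnit_det (h : IsGenEigenbasis S M V lam) : IsUnit V.det :=
  isUnit_det_of_right_inverse h.mul_transpose_mul

theorem inv_eq (h : IsGenEigenbasis S M V lam) : M⁻¹ = V * Vᵀ :=
  inv_eq_left_inv (by rw [Matrix.mul_assoc, h.mul_transpose_mul])

theorem mulVec_ne_zero (h : IsGenEigenbasis S M V lam) {z : n → ℝ} (hz : z ≠ 0) :
    V *ᵥ z ≠ 0 := fun hv => hz <| by
  simpa [mulVec_mulVec, h.orthonormal] using congrArg ((Vᵀ * M) *ᵥ ·) hv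

theorem pos_of_posDef (h : IsGenEigenbasis S M V lam) (hS : S.PosDef) (i : n) : 0 < lam i := by
  have hq := hS.dotProduct_mulVec_pos
    (h.mulVec_ne_zero (z := Pi.single i 1) (Pi.single_ne_zero_iff.2 one_ne_zero))
  rw [star_trivial, mulVec_dotProduct_mulVec_mulVec, h.diagonalizes] at hq
  simpa using hq

theorem transpose_mul_add_smul_mul (h : IsGenEigenbasis S M V lam) (c : ℝ) :
    Vᵀ * (S + c • M) * V = diagonal (fun i => lam i + c) := by
  rw [Matrix.mul_add, Matrix.add_mul, Matrix.mul_smul, Matrix.smul_mul, h.diagonalizes,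
    h.orthonormal, ← diagonal_one, ← diagonal_smul, diagonal_add]
  simp

theorem transpose_mul_smul_add_mul (h : IsGenEigenbasis S M V lam) (c : ℝ) :
    Vᵀ * (c • S + M) * V = diagonal (fun i => c * lam i + 1) := by
  rw [Matrix.mul_add, Matrix.add_mul, Matrix.mul_smul, Matrix.smul_mul, h.diagonalizes,
    h.orthonormal, ← diagonal_one, ← diagonal_smul, diagonal_add]
  simp

end IsGenEigenbasis

theorem isLeast_weightedMean [Nonempty n] (lam : n → ℝ) :
    IsLeast ((fun z : n → ℝ => (∑ i, lam i * z i ^ 2) / ∑ i, z i ^ 2) '' {z | z ≠ 0})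
      (Finset.univ.inf' Finset.univ_nonempty lam) := by
  obtain ⟨i, -, hi⟩ := Finset.exists_mem_eq_inf' Finset.univ_nonempty lam
  refine ⟨⟨Pi.single i 1, Pi.single_ne_zero_iff.2 one_ne_zero, by simp [Pi.single_apply, hi]⟩,
    ?_⟩
  rintro r ⟨z, hz, rfl⟩
  obtain ⟨j, hj⟩ := Function.ne_iff.1 hz
  have hpos : 0 < ∑ i, z i ^ 2 :=
    Finset.sum_pos' (fun i _ => sq_nonneg _) ⟨j, Finset.mem_univ _, pow_two_pos_of_ne_zero hj⟩
  rw [le_div_iff₀ hpos, Finset.mul_sum]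
  exact Finset.sum_le_sum fun i _ =>
    mul_le_mul_of_nonneg_right (Finset.inf'_le _ (Finset.mem_univ i)) (sq_nonneg _)

theorem isGreatest_weightedMean [Nonempty n] (lam : n → ℝ) :
    IsGreatest ((fun z : n → ℝ => (∑ i, lam i * z i ^ 2) / ∑ i, z i ^ 2) '' {z | z ≠ 0})
      (Finset.univ.sup' Finset.univ_nonempty lam) := by
  obtain ⟨i, -, hi⟩ := Finset.exists_mem_eq_sup' Finset.univ_nonempty lam
  refine ⟨⟨Pi.single i 1, Pi.single_ne_zero_iff.2 one_ne_zero, by simp [Pi.single_apply, hi]⟩,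
    ?_⟩
  rintro r ⟨z, hz, rfl⟩
  obtain ⟨j, hj⟩ := Function.ne_iff.1 hz
  have hpos : 0 < ∑ i, z i ^ 2 :=
    Finset.sum_pos' (fun i _ => sq_nonneg _) ⟨j, Finset.mem_univ _, pow_two_pos_of_ne_zero hj⟩
  rw [div_le_iff₀ hpos, Finset.mul_sum]
  exact Finset.sum_le_sum fun i _ =>
    mul_le_mul_of_nonneg_right (Finset.le_sup' _ (Finset.mem_univ i)) (sq_nonneg _)

namespace IsGenEigenbasis

variable {S M V : Matrix n n ℝ} {lam : n → ℝ}

theorem rayleigh_mulVec (h : IsGenEigenbasis S M V lam) (z : n → ℝ) :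
    (V *ᵥ z) ⬝ᵥ (S *ᵥ (V *ᵥ z)) / ((V *ᵥ z) ⬝ᵥ (M *ᵥ (V *ᵥ z))) =
      (∑ i, lam i * z i ^ 2) / ∑ i, z i ^ 2 := by
  rw [mulVec_dotProduct_mulVec_mulVec, mulVec_dotProduct_mulVec_mulVec, h.diagonalizes,
    h.orthonormal, one_mulVec]
  simp only [dotProduct, mulVec_diagonal, sq]
  congr 1
  exact Finset.sum_congr rfl fun i _ => by ring

theorem image_rayleigh (h : IsGenEigenbasis S M V lam) :
    (fun x : n → ℝ => (x ⬝ᵥ S *ᵥ x) / (x ⬝ᵥ M *ᵥ x)) '' {x | x ≠ 0} =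
      (fun z : n → ℝ => (∑ i, lam i * z i ^ 2) / ∑ i, z i ^ 2) '' {z | z ≠ 0} := by
  ext r
  constructor
  · rintro ⟨x, hx, rfl⟩
    have hVz : V *ᵥ ((Vᵀ * M) *ᵥ x) = x := by
      rw [mulVec_mulVec, h.mul_transpose_mul, one_mulVec]
    refine ⟨(Vᵀ * M) *ᵥ x, fun hz => hx ?_, ?_⟩
    · rw [← hVz, hz, mulVec_zero]
    · simp only [← h.rayleigh_mulVec, hVz]
  · rintro ⟨z, hz, rfl⟩
    exact ⟨V *ᵥ z, h.mulVec_ne_zero hz, h.rayleigh_mulVec z⟩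

end IsGenEigenbasis

end GenEigenbasis

section Pencil

variable {N : ℕ} {S M V : Matrix (Fin N) (Fin N) ℝ} {lam : Fin N → ℝ}

namespace IsGenEigenbasis

theorem lamMinGen_eq [Nonempty (Fin N)] (h : IsGenEigenbasis S M V lam) :
    lamMinGen S M = Finset.univ.inf' Finset.univ_nonempty lam := by
  rw [lamMinGen, h.image_rayleigh]
  exact (isLeast_weightedMean lam).csInf_eq

theorem lamMaxGen_eq [Nonempty (Fin N)] (h : IsGenEigenbasis S M V lam) :
    lamMaxGen S M = Finset.univ.sup' Finset.univ_nonempty lam := by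
  rw [lamMaxGen, h.image_rayleigh]
  exact (isGreatest_weightedMean lam).csSup_eq

theorem lamMinGen_pos [Nonempty (Fin N)] (h : IsGenEigenbasis S M V lam)
    (hlam : ∀ i, 0 < lam i) : 0 < lamMinGen S M :=
  h.lamMinGen_eq ▸ (Finset.lt_inf'_iff _).2 fun i _ => hlam i

theorem mem_Icc (h : IsGenEigenbasis S M V lam) (i : Fin N) :
    lam i ∈ Icc (lamMinGen S M) (lamMaxGen S M) := by
  have : Nonempty (Fin N) := ⟨i⟩
  rw [h.lamMinGen_eq, h.lamMaxGen_eq]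
  exact ⟨Finset.inf'_le _ (Finset.mem_univ i), Finset.le_sup' _ (Finset.mem_univ i)⟩

theorem normWeighted_mulVec (h : IsGenEigenbasis S M V lam) (z : Fin N → ℝ) :
    normWeighted M (V *ᵥ z) = √(z ⬝ᵥ z) := by
  rw [normWeighted, mulVec_dotProduct_mulVec_mulVec, h.orthonormal, one_mulVec]

theorem normWeighted_inv (h : IsGenEigenbasis S M V lam) (f : Fin N → ℝ) :
    normWeighted M⁻¹ f = √((Vᵀ *ᵥ f) ⬝ᵥ (Vᵀ *ᵥ f)) := by
  rw [normWeighted, h.inv_eq, ← mulVec_mulVec, dotProduct_mulVec, ← vecMul_transpose,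
    transpose_transpose]

theorem wMinus_eq (h : IsGenEigenbasis S M V lam) (hlam : ∀ i, 0 ≤ lam i) (f : Fin N → ℝ)
    (y : ℝ) : wMinus S M f y = V *ᵥ fun i => (lam i + exp (-y))⁻¹ * (Vᵀ *ᵥ f) i := by
  rw [wMinus, inv_eq_of_transpose_mul_mul_eq_diagonal h.isUnit_det
    (h.transpose_mul_add_smul_mul _) fun i => (add_pos_of_nonneg_of_pos (hlam i) (exp_pos _)).ne',
    ← mulVec_mulVec, ← mulVec_mulVec]
  congr 1
  ext i
  rw [mulVec_diagonal]

theorem wPlus_eq (h : IsGenEigenbasis S M V lam) (hlam : ∀ i, 0 ≤ lam i) (f : Fin N → ℝ)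
    (y : ℝ) : wPlus S M f y = V *ᵥ fun i => (exp (-y) * lam i + 1)⁻¹ * (Vᵀ *ᵥ f) i := by
  have hd : ∀ i, exp (-y) * lam i + 1 ≠ 0 := fun i => by have := hlam i; positivity
  rw [wPlus, inv_eq_of_transpose_mul_mul_eq_diagonal h.isUnit_det
    (h.transpose_mul_smul_add_mul _) hd, ← mulVec_mulVec, ← mulVec_mulVec]
  congr 1
  ext i
  rw [mulVec_diagonal]

end IsGenEigenbasis

end Pencil

noncomputable def quadErr (Q : ℕ) (y τ : Fin Q → ℝ) (ψ : ℝ → ℝ) : ℝ :=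
  ∑ j, τ j * ψ (y j) - ∫ t in Ioi 0, exp (-t) * ψ t

section Quadrature

variable {Q : ℕ} (y τ : Fin Q → ℝ)

theorem quadErr_const_mul (c : ℝ) (ψ : ℝ → ℝ) :
    quadErr Q y τ (fun t => c * ψ t) = c * quadErr Q y τ ψ := by
  simp only [quadErr, mul_sub, Finset.mul_sum, ← integral_const_mul, mul_left_comm]

theorem abs_quadErr_eq_gQuad (a b : ℝ) :
    |quadErr Q y τ (fun t => (1 + a * exp (-b * t))⁻¹)| = gQuad Q y τ a b := by
  simp only [quadErr, gQuad, abs_sub_comm, div_eq_mul_inv]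

variable {y τ}

theorem gQuad_le (hτ : ∀ j, 0 ≤ τ j) {a : ℝ} (ha : 0 ≤ a) (b : ℝ) :
    gQuad Q y τ a b ≤ 1 + ∑ j, τ j := by
  have hden : ∀ t, 1 ≤ 1 + a * exp (-b * t) := fun t => le_add_of_nonneg_right (by positivity)
  have hint : |∫ t in Ioi 0, exp (-t) / (1 + a * exp (-b * t))| ≤ 1 := by
    rw [← Real.norm_eq_abs]
    refine (norm_integral_le_of_norm_le (integrableOn_exp_neg_Ioi 0)
      (.of_forall fun t => ?_)).trans_eq integral_exp_neg_Ioi_zero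
    rw [Real.norm_eq_abs, abs_of_nonneg (by have := hden t; positivity)]
    exact div_le_self (exp_pos _).le (hden t)
  have hsum : |∑ j, τ j / (1 + a * exp (-b * y j))| ≤ ∑ j, τ j := by
    refine (Finset.abs_sum_le_sum_abs _ _).trans (Finset.sum_le_sum fun j _ => ?_)
    rw [abs_of_nonneg (by have := hden (y j); have := hτ j; positivity)]
    exact div_le_self (hτ j) (hden _)
  exact (abs_sub _ _).trans (add_le_add hint hsum)

theorem gQuad_le_sSup (hτ : ∀ j, 0 ≤ τ j) {lo hi a : ℝ} (hlo : 0 ≤ lo)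
    (ha : a ∈ Icc lo hi) (b : ℝ) :
    gQuad Q y τ a b ≤ sSup ((fun a => gQuad Q y τ a b) '' Icc lo hi) := by
  refine le_csSup ⟨1 + ∑ j, τ j, ?_⟩ (mem_image_of_mem _ ha)
  rintro _ ⟨a', ha', rfl⟩
  exact gQuad_le hτ (hlo.trans ha'.1) b

theorem abs_quadErr_inv_add_exp_le (hτ : ∀ j, 0 ≤ τ j) {lo hi lam : ℝ} (hlo : 0 < lo)
    (hlam : lam ∈ Icc lo hi) (c : ℝ) :
    |quadErr Q y τ (fun t => (lam + exp (-(t / c)))⁻¹)| ≤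
      max 1 (1 / lo) * sSup ((fun a => gQuad Q y τ a (1 / c)) '' Icc (1 / hi) (1 / lo)) := by
  have hlam0 : 0 < lam := hlo.trans_le hlam.1
  have hinv : lam⁻¹ ∈ Icc (1 / hi) (1 / lo) := by
    rw [one_div, one_div]
    exact ⟨inv_anti₀ hlam0 hlam.2, inv_anti₀ hlo hlam.1⟩
  have hrescale : (fun t => (lam + exp (-(t / c)))⁻¹) =
      fun t => lam⁻¹ * (1 + lam⁻¹ * exp (-(1 / c) * t))⁻¹ := by
    funext t
    rw [← mul_inv, mul_add, mul_one, ← mul_assoc, mul_inv_cancel₀ hlam0.ne', one_mul]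
    ring_nf
  rw [hrescale, quadErr_const_mul, abs_mul, abs_quadErr_eq_gQuad, abs_of_pos (inv_pos.2 hlam0)]
  exact mul_le_mul (hinv.2.trans (le_max_right _ _))
    (gQuad_le_sSup hτ (one_div_pos.2 (hlam0.trans_le hlam.2)).le hinv _) (abs_nonneg _)
    (zero_le_one.trans (le_max_left _ _))

theorem abs_quadErr_inv_exp_mul_add_one_le (hτ : ∀ j, 0 ≤ τ j) {lo hi lam : ℝ}
    (hlo : 0 ≤ lo) (hlam : lam ∈ Icc lo hi) (c : ℝ) :
    |quadErr Q y τ (fun t => (exp (-(t / c)) * lam + 1)⁻¹)| ≤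
      max 1 (1 / lo) * sSup ((fun a => gQuad Q y τ a (1 / c)) '' Icc lo hi) := by
  have hrescale : (fun t => (exp (-(t / c)) * lam + 1)⁻¹) =
      fun t => (1 + lam * exp (-(1 / c) * t))⁻¹ := by
    funext t
    ring_nf
  have hg := gQuad_le_sSup (y := y) hτ hlo hlam (1 / c)
  rw [hrescale, abs_quadErr_eq_gQuad]
  exact hg.trans (le_mul_of_one_le_left ((abs_nonneg _).trans hg) (le_max_left _ _))

theorem integrableOn_exp_neg_mul_inv {ψ : ℝ → ℝ} {p : ℝ} (hψ : Continuous ψ) (hp : 0 < p)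
    (hpψ : ∀ t, p ≤ ψ t) : IntegrableOn (fun t => exp (-t) * (ψ t)⁻¹) (Ioi 0) := by
  refine (integrableOn_exp_neg_Ioi 0).mul_bdd (c := p⁻¹)
    (hψ.inv₀ fun t => (hp.trans_le (hpψ t)).ne').aestronglyMeasurable (.of_forall fun t => ?_)
  rw [norm_inv, Real.norm_of_nonneg (hp.le.trans (hpψ t))]
  exact inv_anti₀ hp (hpψ t)

theorem integrableOn_exp_neg_mul_inv_add_exp {lam : ℝ} (hlam : 0 < lam) (c : ℝ) :
    IntegrableOn (fun t => exp (-t) * (lam + exp (-(t / c)))⁻¹) (Ioi 0) :=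
  integrableOn_exp_neg_mul_inv (by fun_prop) hlam fun _ => le_add_of_nonneg_right (exp_pos _).le

theorem integrableOn_exp_neg_mul_inv_exp_mul_add_one {lam : ℝ} (hlam : 0 ≤ lam) (c : ℝ) :
    IntegrableOn (fun t => exp (-t) * (exp (-(t / c)) * lam + 1)⁻¹) (Ioi 0) :=
  integrableOn_exp_neg_mul_inv (by fun_prop) one_pos fun _ =>
    le_add_of_nonneg_left (by positivity)

theorem sum_smul_sub_integral_smul_mulVec {m n : Type*} [Fintype m] [Fintype n] (V : Matrix m n ℝ)
    (g : n → ℝ) (φ : n → ℝ → ℝ)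
    (hφ : ∀ i, IntegrableOn (fun t => exp (-t) * φ i t) (Ioi 0)) :
    ∑ j, τ j • (V *ᵥ fun i => φ i (y j) * g i) -
        ∫ t in Ioi 0, exp (-t) • (V *ᵥ fun i => φ i t * g i) =
      V *ᵥ fun i => quadErr Q y τ (φ i) * g i := by
  have hint : Integrable (fun t => exp (-t) • fun i => φ i t * g i) (volume.restrict (Ioi 0)) :=
    Integrable.of_eval fun i => by simpa [mul_assoc] using (hφ i).mul_const (g i)
  have hcomm : ∫ t in Ioi 0, exp (-t) • (V *ᵥ fun i => φ i t * g i) =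
      V *ᵥ ∫ t in Ioi 0, exp (-t) • fun i => φ i t * g i := by
    simp_rw [← mulVec_smul]
    exact (mulVecLin V).toContinuousLinearMap.integral_comp_comm hint
  simp_rw [hcomm, ← mulVec_smul, ← mulVec_sum, ← mulVec_sub]
  congr 1
  ext i
  rw [Pi.sub_apply, eval_integral (Integrable.eval hint), Finset.sum_apply]
  simp only [quadErr, Pi.smul_apply, smul_eq_mul, sub_mul, Finset.sum_mul, ← integral_mul_const,
    mul_assoc]

end Quadrature

theorem sSup_image_gQuad_nonneg {Q : ℕ} (y τ : Fin Q → ℝ) (b : ℝ) (s : Set ℝ) :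
    0 ≤ sSup ((fun a => gQuad Q y τ a b) '' s) :=
  Real.sSup_nonneg <| by rintro _ ⟨a, -, rfl⟩; exact abs_nonneg _

theorem beta0_nonneg_s15 {t : ℝ} (h0 : 0 ≤ t) (h1 : t ≤ 1) : 0 ≤ beta0 t :=
  div_nonneg (sin_nonneg_of_nonneg_of_le_pi (by positivity)
    (mul_le_of_le_one_right pi_pos.le h1)) (by positivity)

theorem abs_mul_add_mul_le {a b x y X Y C : ℝ} (ha : 0 ≤ a) (hb : 0 ≤ b) (hx : |x| ≤ C * X)
    (hy : |y| ≤ C * Y) : |a * x + b * y| ≤ C * (a * X + b * Y) := by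
  refine (abs_add_le _ _).trans ?_
  rw [abs_mul, abs_mul, abs_of_nonneg ha, abs_of_nonneg hb, mul_add, mul_left_comm C a,
    mul_left_comm C b]
  exact add_le_add (mul_le_mul_of_nonneg_left hx ha) (mul_le_mul_of_nonneg_left hy hb)

theorem sqrt_dotProduct_self_le {n : Type*} [Fintype n] {x g : n → ℝ} {C : ℝ} (hC : 0 ≤ C)
    (h : ∀ i, |x i| ≤ C * |g i|) : √(x ⬝ᵥ x) ≤ C * √(g ⬝ᵥ g) := by
  rw [← sqrt_sq hC, ← sqrt_mul (sq_nonneg C)]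
  refine sqrt_le_sqrt ?_
  simp only [dotProduct, Finset.mul_sum]
  refine Finset.sum_le_sum fun i _ => ?_
  calc x i * x i = |x i| ^ 2 := by rw [sq_abs, sq]
    _ ≤ (C * |g i|) ^ 2 := pow_le_pow_left₀ (abs_nonneg _) (h i) 2
    _ = C ^ 2 * (g i * g i) := by rw [mul_pow, sq_abs, sq (g i)]

theorem quad_error_certificate_general {N : ℕ} (S M : Matrix (Fin N) (Fin N) ℝ)
    (hS : S.PosDef) (hM : M.PosDef) (f : Fin N → ℝ)
    (s : ℝ) (hs : s ∈ Set.Ioo (0:ℝ) 1)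
    (Mm Mp : ℕ) (ym : Fin Mm → ℝ) (τm : Fin Mm → ℝ) (yp : Fin Mp → ℝ) (τp : Fin Mp → ℝ)
    (hτm : ∀ j, 0 ≤ τm j) (hτp : ∀ j, 0 ≤ τp j) :
    normWeighted M
        ((beta0 (1 - s) • ∑ j, τm j • wMinus S M f (ym j / (1 - s)) +
            beta0 s • ∑ j, τp j • wPlus S M f (yp j / s)) -
          (beta0 (1 - s) •
              (∫ t in Set.Ioi (0:ℝ), Real.exp (-t) • wMinus S M f (t / (1 - s))) +
            beta0 s •
              (∫ t in Set.Ioi (0:ℝ), Real.exp (-t) • wPlus S M f (t / s)))) ≤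
      max 1 (1 / lamMinGen S M) * normWeighted M⁻¹ f *
        (beta0 (1 - s) *
            sSup ((fun a => gQuad Mm ym τm a (1 / (1 - s))) ''
              Set.Icc (1 / lamMaxGen S M) (1 / lamMinGen S M)) +
          beta0 s *
            sSup ((fun a => gQuad Mp yp τp a (1 / s)) ''
              Set.Icc (lamMinGen S M) (lamMaxGen S M))) := by
  obtain ⟨hs0, hs1⟩ := hs
  obtain ⟨V, lam, h⟩ := exists_isGenEigenbasis hS.isHermitian hM
  have hlam := h.pos_of_posDef hS
  have hβm := beta0_nonneg_s15 (sub_nonneg.2 hs1.le) (sub_le_self _ hs0.le)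
  have hβp := beta0_nonneg_s15 hs0.le hs1.le
  rw [add_sub_add_comm, ← smul_sub, ← smul_sub]
  simp only [h.wMinus_eq fun i => (hlam i).le, h.wPlus_eq fun i => (hlam i).le]
  rw [sum_smul_sub_integral_smul_mulVec (y := ym) (τ := τm) V (Vᵀ *ᵥ f) _
      fun i => integrableOn_exp_neg_mul_inv_add_exp (hlam i) (1 - s),
    sum_smul_sub_integral_smul_mulVec (y := yp) (τ := τp) V (Vᵀ *ᵥ f) _
      fun i => integrableOn_exp_neg_mul_inv_exp_mul_add_one (hlam i).le s,
    ← mulVec_smul, ← mulVec_smul, ← mulVec_add, h.normWeighted_mulVec, h.normWeighted_inv,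
    mul_right_comm]
  refine sqrt_dotProduct_self_le (mul_nonneg (zero_le_one.trans (le_max_left _ _))
    (add_nonneg (mul_nonneg hβm (sSup_image_gQuad_nonneg _ _ _ _))
      (mul_nonneg hβp (sSup_image_gQuad_nonneg _ _ _ _)))) fun i => ?_
  have : Nonempty (Fin N) := ⟨i⟩
  simp only [Pi.add_apply, Pi.smul_apply, smul_eq_mul, ← mul_assoc, ← add_mul, abs_mul (_ + _)]
  exact mul_le_mul_of_nonneg_right (abs_mul_add_mul_le hβm hβp
    (abs_quadErr_inv_add_exp_le hτm (h.lamMinGen_pos hlam) (h.mem_Icc i) _)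
    (abs_quadErr_inv_exp_mul_add_one_le hτp (h.lamMinGen_pos hlam).le (h.mem_Icc i) _))
    (abs_nonneg _)

/-- Proposition 4.1 (matrix form): the quadrature-error certificate for the fully
discrete scheme. With
`G₋ = β₀(1-s) sup_{a ∈ [1/λ_max, 1/λ_min]} g_{M₋}(a, 1/(1-s))` and
`G₊ = β₀(s) sup_{a ∈ [λ_min, λ_max]} g_{M₊}(a, 1/s)`,
`‖u(s) − ũ(s)‖_M ≤ max(1, 1/λ_min(S,M)) ‖f‖_{M⁻¹} (G₋ + G₊)`. -/
theorem quad_error_certificate {N : ℕ} (S M : Matrix (Fin N) (Fin N) ℝ)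
    (hS : S.PosDef) (hM : M.PosDef) (f : Fin N → ℝ)
    (s : ℝ) (hs : s ∈ Set.Ioo (0:ℝ) 1)
    (Mm Mp : ℕ) (ym : Fin Mm → ℝ) (τm : Fin Mm → ℝ) (yp : Fin Mp → ℝ) (τp : Fin Mp → ℝ)
    (hym : ∀ j, 0 ≤ ym j) (hyp : ∀ j, 0 ≤ yp j)
    (hτm : ∀ j, 0 ≤ τm j) (hτp : ∀ j, 0 ≤ τp j) :
    normWeighted M
        ((beta0 (1 - s) • ∑ j, τm j • wMinus S M f (ym j / (1 - s)) +
            beta0 s • ∑ j, τp j • wPlus S M f (yp j / s)) -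
          (beta0 (1 - s) •
              (∫ t in Set.Ioi (0:ℝ), Real.exp (-t) • wMinus S M f (t / (1 - s))) +
            beta0 s •
              (∫ t in Set.Ioi (0:ℝ), Real.exp (-t) • wPlus S M f (t / s)))) ≤
      max 1 (1 / lamMinGen S M) * normWeighted M⁻¹ f *
        (beta0 (1 - s) *
            sSup ((fun a => gQuad Mm ym τm a (1 / (1 - s))) ''
              Set.Icc (1 / lamMaxGen S M) (1 / lamMinGen S M)) +
          beta0 s *
            sSup ((fun a => gQuad Mp yp τp a (1 / s)) ''
              Set.Icc (lamMinGen S M) (lamMaxGen S M))) :=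
  quad_error_certificate_general S M hS hM f s hs Mm Mp ym τm yp τp hτm hτp
end
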